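/- arXiv:1410.7202 — 3 statements merged into one kernel-verified Lean document; each statement's English description precedes it below -/
import Mathlib

section
/- (Theorem 4.1) Fix integers m ≥ 1 and k₁, …, k_m ≥ 1, fix m mutually distinct complex numbers Λ₁, …, Λ_m, and fix an index s ∈ {1, …, m}. For every δ > 0 there exists ε₀ > 0 such that: whenever λ_{ij} (i = 1, …, m; j = 1, …, kᵢ) are mutually distinct complex numbers with |λ_{ij} − Λᵢ| < ε₀ for all i, j, there exists a function f belonging to the span of the exponential functions e^{λ_{ij} x} in L²([−π, π]) such that ‖f(x) − x^{k_s − 1} e^{Λ_s x}‖_{L²([−π,π])} < δ. -/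
/-!
Only the `s`-th cluster is needed. With `ν_j = λ_{s,j}` and `n + 1 = k_s`, the combination
`n! ∑ⱼ e^{ν_j x} / ∏_{l ≠ j} (ν_j - ν_l)` is `n!` times the divided difference of `z ↦ e^{xz}`
at the nodes `ν_j` (the weights are `Lagrange.nodalWeight`). By partial fractions and Cauchy's
formula it equals `(n!/2πi) ∮_{|z - Λ_s| = 1} e^{xz} / ∏ⱼ (z - ν_j) dz`, while `x^n e^{Λ_s x}` is
the same integral with `∏ⱼ (z - ν_j)` replaced by `(z - Λ_s)^{n+1}`. The two kernels differ by
`O(ε)` on the circle, uniformly in `|x| ≤ π`, which bounds the sup norm and hence the `L²` norm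
of the error.
-/

open MeasureTheory

/-- The L² norm on the interval `[-π, π]`: `‖g‖ = (∫_{-π}^{π} |g(x)|² dx)^{1/2}`. -/
noncomputable def L2norm (g : ℝ → ℂ) : ℝ :=
  Real.sqrt (∫ x in Set.Icc (-Real.pi) Real.pi, ‖g x‖ ^ 2)

open Complex Finset Lagrange Metric Real
open scoped Nat

theorem norm_prod_sub_prod_le {ι R : Type*} [NormedCommRing R] [NormOneClass R]
    (s : Finset ι) (a b : ι → R) {M ε : ℝ} (hM : 1 ≤ M)
    (ha : ∀ i ∈ s, ‖a i‖ ≤ M) (hb : ∀ i ∈ s, ‖b i‖ ≤ M) (hab : ∀ i ∈ s, ‖a i - b i‖ ≤ ε) :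
    ‖∏ i ∈ s, a i - ∏ i ∈ s, b i‖ ≤ #s * ε * M ^ #s := by
  induction s using Finset.cons_induction with
  | empty => simp
  | cons i s his ih =>
    simp only [forall_mem_cons] at ha hb hab
    have hε : 0 ≤ ε := (norm_nonneg _).trans hab.1
    have hprod : ‖∏ j ∈ s, a j‖ ≤ M ^ #s :=
      (Finset.norm_prod_le _ _).trans
        ((prod_le_prod (fun _ _ => norm_nonneg _) ha.2).trans_eq (prod_const M))
    rw [prod_cons, prod_cons, card_cons,
      show a i * ∏ j ∈ s, a j - b i * ∏ j ∈ s, b j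
        = (a i - b i) * ∏ j ∈ s, a j + b i * (∏ j ∈ s, a j - ∏ j ∈ s, b j) by ring]
    calc _ ≤ ‖a i - b i‖ * ‖∏ j ∈ s, a j‖ + ‖b i‖ * ‖∏ j ∈ s, a j - ∏ j ∈ s, b j‖ :=
          (norm_add_le _ _).trans (add_le_add (norm_mul_le _ _) (norm_mul_le _ _))
      _ ≤ ε * M ^ #s + M * (#s * ε * M ^ #s) := by
          gcongr
          exacts [hab.1, hb.1, ih ha.2 hb.2 hab.2]
      _ ≤ ε * M ^ (#s + 1) + #s * ε * M ^ (#s + 1) := by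
          rw [show M * (#s * ε * M ^ #s) = #s * ε * M ^ (#s + 1) by ring]
          gcongr
          exact Nat.le_succ _
      _ = _ := by push_cast; ring

section DividedDifference

variable {ι : Type*} {s : Finset ι} {ν : ι → ℂ}

theorem inv_prod_sub_eq_sum_nodalWeight_mul_inv [DecidableEq ι] (hν : Set.InjOn ν s)
    (hs : s.Nonempty) {z : ℂ} (hz : ∀ i ∈ s, z ≠ ν i) :
    (∏ i ∈ s, (z - ν i))⁻¹ = ∑ i ∈ s, nodalWeight s ν i * (z - ν i)⁻¹ := by
  refine inv_eq_of_mul_eq_one_right ?_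
  simpa [interpolate_one hν hs, eval_nodal] using (eval_interpolate_not_at_node 1 hz).symm

theorem circleIntegral_inv_prod_sub_smul [DecidableEq ι] {g : ℂ → ℂ} {c : ℂ} {R : ℝ}
    (hg : DiffContOnCl ℂ g (ball c R)) (hν : Set.InjOn ν s) (hs : s.Nonempty)
    (hνc : ∀ i ∈ s, ν i ∈ ball c R) :
    ∮ z in C(c, R), (∏ i ∈ s, (z - ν i))⁻¹ • g z
      = (2 * π * I) • ∑ i ∈ s, nodalWeight s ν i • g (ν i) := by
  obtain ⟨i₀, hi₀⟩ := hs
  have hR : 0 ≤ R := (pos_of_mem_ball (hνc i₀ hi₀)).le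
  have hzν : ∀ z ∈ sphere c R, ∀ i ∈ s, z ≠ ν i := by
    intro z hz i hi h
    have := hνc i hi
    rw [← h, mem_ball] at this
    exact this.ne (mem_sphere.1 hz)
  have hgc : ContinuousOn g (sphere c R) := hg.continuousOn_ball.mono sphere_subset_closedBall
  have hint : ∀ i ∈ s, CircleIntegrable (fun z => nodalWeight s ν i • ((z - ν i)⁻¹ • g z)) c R :=
    fun i hi => ContinuousOn.circleIntegrable hR <| continuousOn_const.fun_smul <|
      (ContinuousOn.inv₀ (by fun_prop) fun z hz => sub_ne_zero.2 (hzν z hz i hi)).fun_smul hgc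
  calc ∮ z in C(c, R), (∏ i ∈ s, (z - ν i))⁻¹ • g z
      = ∮ z in C(c, R), ∑ i ∈ s, nodalWeight s ν i • ((z - ν i)⁻¹ • g z) := by
        refine circleIntegral.integral_congr hR fun z hz => ?_
        simp only [inv_prod_sub_eq_sum_nodalWeight_mul_inv hν ⟨i₀, hi₀⟩ (hzν z hz), sum_smul,
          smul_smul]
    _ = (2 * π * I) • ∑ i ∈ s, nodalWeight s ν i • g (ν i) := by
        rw [circleIntegral.integral_fun_sum hint, smul_sum]
        refine sum_congr rfl fun i hi => ?_
        rw [circleIntegral.integral_smul, hg.circleIntegral_sub_inv_smul (hνc i hi), smul_comm]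

theorem norm_inv_prod_sub_sub_inv_pow_le {Λ z : ℂ} {ε : ℝ} (hε : ε ≤ 1 / 2) (hz : ‖z - Λ‖ = 1)
    (hνΛ : ∀ i ∈ s, ‖ν i - Λ‖ ≤ ε) :
    ‖(∏ i ∈ s, (z - ν i))⁻¹ - ((z - Λ) ^ #s)⁻¹‖ ≤ #s * ε * 4 ^ #s := by
  have hzν (i) (hi : i ∈ s) : ‖z - ν i‖ ≤ 2 ∧ 1 / 2 ≤ ‖z - ν i‖ := by
    have h := sub_sub_sub_cancel_right z (ν i) Λ
    have h₁ := norm_sub_le (z - Λ) (ν i - Λ)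
    have h₂ := norm_sub_norm_le (z - Λ) (ν i - Λ)
    rw [h, hz] at h₁ h₂
    constructor <;> linarith [hνΛ i hi]
  have hP : (1 / 2 : ℝ) ^ #s ≤ ‖∏ i ∈ s, (z - ν i)‖ := by
    rw [norm_prod, ← prod_const]
    exact prod_le_prod (fun _ _ => by norm_num) fun i hi => (hzν i hi).2
  have hQ : ‖(z - Λ) ^ #s‖ = 1 := by rw [norm_pow, hz, one_pow]
  have hQP : ‖(z - Λ) ^ #s - ∏ i ∈ s, (z - ν i)‖ ≤ #s * ε * 2 ^ #s := by
    rw [← prod_const]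
    refine norm_prod_sub_prod_le s _ _ one_le_two (fun _ _ => by rw [hz]; norm_num)
      (fun i hi => (hzν i hi).1) fun i hi => ?_
    rw [sub_sub_sub_cancel_left]
    exact hνΛ i hi
  have hQP₀ : 0 ≤ #s * ε * 2 ^ #s := (norm_nonneg _).trans hQP
  rw [inv_sub_inv (norm_pos_iff.1 ((by positivity : (0 : ℝ) < _).trans_le hP))
      (norm_pos_iff.1 (hQ ▸ one_pos)), norm_div, norm_mul, hQ, mul_one,
    div_le_iff₀ ((by positivity : (0 : ℝ) < _).trans_le hP)]
  calc _ ≤ #s * ε * 2 ^ #s := hQP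
    _ = #s * ε * 2 ^ #s * 2 ^ #s * (1 / 2) ^ #s := by
        rw [mul_assoc _ (2 ^ #s : ℝ), ← mul_pow]; norm_num
    _ ≤ #s * ε * 2 ^ #s * 2 ^ #s * ‖∏ i ∈ s, (z - ν i)‖ := by gcongr
    _ = #s * ε * 4 ^ #s * ‖∏ i ∈ s, (z - ν i)‖ := by
        rw [show (4 : ℝ) = 2 * 2 by norm_num, mul_pow]; ring

theorem norm_sum_nodalWeight_smul_sub_iteratedDeriv_le [DecidableEq ι] {g : ℂ → ℂ} {Λ : ℂ}
    {n : ℕ} {ε M : ℝ} (hg : DiffContOnCl ℂ g (ball Λ 1)) (hgM : ∀ z ∈ sphere Λ 1, ‖g z‖ ≤ M)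
    (hν : Set.InjOn ν s) (hs : #s = n + 1) (hε : ε ≤ 1 / 2) (hνΛ : ∀ i ∈ s, ‖ν i - Λ‖ ≤ ε) :
    ‖∑ i ∈ s, nodalWeight s ν i • g (ν i) - (n ! : ℂ)⁻¹ • iteratedDeriv n g Λ‖
      ≤ (n + 1) * 4 ^ (n + 1) * M * ε := by
  have hs₀ : s.Nonempty := card_pos.1 (hs ▸ n.succ_pos)
  have hball (i) (hi : i ∈ s) : ν i ∈ ball Λ 1 :=
    mem_ball_iff_norm.2 ((hνΛ i hi).trans_lt (by linarith))
  have hzΛ (z) (hz : z ∈ sphere Λ 1) : ‖z - Λ‖ = 1 := mem_sphere_iff_norm.1 hz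
  have hzν (z) (hz : z ∈ sphere Λ 1) (i) (hi : i ∈ s) : z - ν i ≠ 0 := by
    rintro h
    have := hball i hi
    rw [← sub_eq_zero.1 h, mem_ball_iff_norm, hzΛ z hz] at this
    exact lt_irrefl _ this
  have hgc : ContinuousOn g (sphere Λ 1) := hg.continuousOn_ball.mono sphere_subset_closedBall
  have hint₁ : CircleIntegrable (fun z => (∏ i ∈ s, (z - ν i))⁻¹ • g z) Λ 1 :=
    ContinuousOn.circleIntegrable zero_le_one <|
      (ContinuousOn.inv₀ (by fun_prop) fun z hz => prod_ne_zero_iff.2 (hzν z hz)).fun_smul hgc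
  have hint₂ : CircleIntegrable (fun z => (1 / (z - Λ) ^ (n + 1)) • g z) Λ 1 :=
    ContinuousOn.circleIntegrable zero_le_one <|
      (ContinuousOn.div (by fun_prop) (by fun_prop) fun z hz =>
        pow_ne_zero _ (norm_ne_zero_iff.1 (by rw [hzΛ z hz]; exact one_ne_zero))).fun_smul hgc
  have hkernel (z) (hz : z ∈ sphere Λ 1) :
      ‖((∏ i ∈ s, (z - ν i))⁻¹ - 1 / (z - Λ) ^ (n + 1)) • g z‖ ≤ (n + 1) * ε * 4 ^ (n + 1) * M := by
    have h := norm_inv_prod_sub_sub_inv_pow_le hε (hzΛ z hz) hνΛ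
    rw [hs, Nat.cast_succ, inv_eq_one_div ((z - Λ) ^ (n + 1))] at h
    rw [norm_smul]
    exact mul_le_mul h (hgM z hz) (norm_nonneg _) ((norm_nonneg _).trans h)
  have hcauchy : (2 * π * I) • (∑ i ∈ s, nodalWeight s ν i • g (ν i)
      - (n ! : ℂ)⁻¹ • iteratedDeriv n g Λ)
      = ∮ z in C(Λ, 1), ((∏ i ∈ s, (z - ν i))⁻¹ - 1 / (z - Λ) ^ (n + 1)) • g z := by
    simp_rw [sub_smul]
    rw [circleIntegral.integral_sub hint₁ hint₂, circleIntegral_inv_prod_sub_smul hg hν hs₀ hball,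
      hg.circleIntegral_one_div_sub_center_pow_smul one_pos n, smul_sub, smul_smul, div_eq_mul_inv]
  have h := circleIntegral.norm_integral_le_of_norm_le_const zero_le_one hkernel
  rw [← hcauchy, norm_smul, show ‖(2 * π * I : ℂ)‖ = 2 * π by simp [pi_pos.le], mul_one] at h
  exact (le_of_mul_le_mul_left h two_pi_pos).trans_eq (by ring)

end DividedDifference

theorem norm_cexp_ofReal_mul_le_of_mem_sphere {x : ℝ} {z Λ : ℂ} (hx : |x| ≤ π)
    (hz : z ∈ sphere Λ 1) : ‖exp (x * z)‖ ≤ Real.exp (π * (‖Λ‖ + 1)) := by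
  refine (norm_exp_le_exp_norm _).trans (Real.exp_le_exp.2 ?_)
  rw [norm_mul, norm_real, Real.norm_eq_abs]
  exact mul_le_mul hx (norm_le_of_mem_closedBall (sphere_subset_closedBall hz)) (norm_nonneg _)
    pi_pos.le

theorem norm_factorial_mul_sum_nodalWeight_mul_exp_sub_le {ι : Type*} [DecidableEq ι]
    {s : Finset ι} {ν : ι → ℂ} {Λ : ℂ} {n : ℕ} {ε x : ℝ} (hν : Set.InjOn ν s) (hs : #s = n + 1)
    (hε : ε ≤ 1 / 2) (hνΛ : ∀ i ∈ s, ‖ν i - Λ‖ ≤ ε) (hx : |x| ≤ π) :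
    ‖(n ! : ℂ) * ∑ i ∈ s, nodalWeight s ν i * exp (ν i * x) - x ^ n * exp (Λ * x)‖
      ≤ n ! * (n + 1) * 4 ^ (n + 1) * Real.exp (π * (‖Λ‖ + 1)) * ε := by
  have h := norm_sum_nodalWeight_smul_sub_iteratedDeriv_le (g := fun z => exp (x * z))
    (Differentiable.diffContOnCl (by fun_prop))
    (fun z hz => norm_cexp_ofReal_mul_le_of_mem_sphere hx hz) hν hs hε hνΛ
  simp only [iteratedDeriv_cexp_const_mul] at h
  simp only [smul_eq_mul, mul_comm (x : ℂ)] at h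
  have hn : (n ! : ℂ) ≠ 0 := Nat.cast_ne_zero.2 n.factorial_ne_zero
  calc _ = ‖(n ! : ℂ) * (∑ i ∈ s, nodalWeight s ν i * exp (ν i * x)
          - (n ! : ℂ)⁻¹ * (x ^ n * exp (Λ * x)))‖ := by
        rw [mul_sub, mul_inv_cancel_left₀ hn]
    _ ≤ n ! * ((n + 1) * 4 ^ (n + 1) * Real.exp (π * (‖Λ‖ + 1)) * ε) := by
        rw [norm_mul, Complex.norm_natCast]
        gcongr
    _ = _ := by ring

theorem L2norm_le_of_forall_norm_le {g : ℝ → ℂ} (hg : Continuous g) {B : ℝ}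
    (hgB : ∀ x ∈ Set.Icc (-π) π, ‖g x‖ ≤ B) : L2norm g ≤ √(2 * π) * B := by
  have hB : 0 ≤ B := (norm_nonneg _).trans (hgB 0 ⟨by linarith [pi_pos], pi_pos.le⟩)
  have hint : ∫ x in Set.Icc (-π) π, ‖g x‖ ^ 2 ≤ ∫ _ in Set.Icc (-π) π, B ^ 2 :=
    setIntegral_mono_on (hg.norm.pow 2).integrableOn_Icc
      (integrableOn_const measure_Icc_lt_top.ne) measurableSet_Icc
      fun x hx => pow_le_pow_left₀ (norm_nonneg _) (hgB x hx) 2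
  rw [setIntegral_const, Real.volume_real_Icc_of_le (by linarith [pi_pos]), smul_eq_mul,
    show π - -π = 2 * π by ring] at hint
  rw [L2norm, ← Real.sqrt_sq hB, ← Real.sqrt_mul two_pi_pos.le]
  exact Real.sqrt_le_sqrt hint

theorem stmt14_general (m : ℕ) (k : Fin m → ℕ) (hk : ∀ i, 1 ≤ k i)
    (Λ : Fin m → ℂ) (s : Fin m) :
    ∀ δ > (0 : ℝ), ∃ ε₀ > (0 : ℝ),
      ∀ lam : (Σ i : Fin m, Fin (k i)) → ℂ, Function.Injective lam →
      (∀ p : Σ i : Fin m, Fin (k i), ‖lam p - Λ p.1‖ < ε₀) →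
      ∃ f : ℝ → ℂ,
        f ∈ Submodule.span ℂ
          (Set.range fun p : Σ i : Fin m, Fin (k i) =>
            fun x : ℝ => Complex.exp (lam p * x)) ∧
        L2norm (fun x : ℝ =>
          f x - (x : ℂ) ^ (k s - 1) * Complex.exp (Λ s * x)) < δ := by
  intro δ hδ
  obtain ⟨n, hn⟩ : ∃ n, k s = n + 1 := Nat.exists_eq_add_one.2 (hk s)
  set C : ℝ := √(2 * π) * (n ! * (n + 1) * 4 ^ (n + 1) * Real.exp (π * (‖Λ s‖ + 1)))
  have hC : 0 < C := by positivity
  refine ⟨min (1 / 2) (δ / (2 * C)), by positivity, fun lam hlam hclose => ?_⟩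
  set ν : Fin (k s) → ℂ := fun j => lam ⟨s, j⟩
  refine ⟨fun x => (n ! : ℂ) * ∑ j, nodalWeight univ ν j * exp (ν j * x), ?_, ?_⟩
  · have hf : (fun x : ℝ => (n ! : ℂ) * ∑ j, nodalWeight univ ν j * exp (ν j * x))
        = ∑ j, ((n ! : ℂ) * nodalWeight univ ν j) • fun x : ℝ => exp (lam ⟨s, j⟩ * x) := by
      ext x
      simp [Finset.sum_apply, mul_sum, mul_assoc, ν]
    rw [hf]
    exact Submodule.sum_smul_mem _ _ fun j _ => Submodule.subset_span ⟨⟨s, j⟩, rfl⟩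
  · calc _ ≤ √(2 * π) * (n ! * (n + 1) * 4 ^ (n + 1) * Real.exp (π * (‖Λ s‖ + 1))
          * min (1 / 2) (δ / (2 * C))) := by
          refine L2norm_le_of_forall_norm_le (by fun_prop) fun x hx => ?_
          rw [show k s - 1 = n by omega]
          exact norm_factorial_mul_sum_nodalWeight_mul_exp_sub_le
            (hlam.comp sigma_mk_injective).injOn (by rw [card_univ, Fintype.card_fin, hn])
            (min_le_left _ _) (fun j _ => (hclose ⟨s, j⟩).le) (abs_le.2 hx)
      _ ≤ C * (δ / (2 * C)) := by rw [← mul_assoc]; gcongr; exact min_le_right _ _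
      _ < δ := by field_simp; linarith

/-- Theorem 4.1: fix cluster limits `Λ₁, …, Λ_m` (mutually distinct),
multiplicities `k₁, …, k_m ≥ 1` and an index `s`. For every `δ > 0` there is
`ε₀ > 0` such that whenever the `λ_{ij}` are mutually distinct with
`|λ_{ij} − Λᵢ| < ε₀`, some element `f` of the span of the exponentials
`e^{λ_{ij} x}` satisfies `‖f(x) − x^{k_s − 1} e^{Λ_s x}‖_{L²([-π,π])} < δ`. -/
theorem stmt14 (m : ℕ) (hm : 1 ≤ m) (k : Fin m → ℕ) (hk : ∀ i, 1 ≤ k i)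
    (Λ : Fin m → ℂ) (hΛ : Function.Injective Λ) (s : Fin m) :
    ∀ δ > (0 : ℝ), ∃ ε₀ > (0 : ℝ),
      ∀ lam : (Σ i : Fin m, Fin (k i)) → ℂ, Function.Injective lam →
      (∀ p : Σ i : Fin m, Fin (k i), ‖lam p - Λ p.1‖ < ε₀) →
      ∃ f : ℝ → ℂ,
        f ∈ Submodule.span ℂ
          (Set.range fun p : Σ i : Fin m, Fin (k i) =>
            fun x : ℝ => Complex.exp (lam p * x)) ∧
        L2norm (fun x : ℝ =>
          f x - (x : ℂ) ^ (k s - 1) * Complex.exp (Λ s * x)) < δ :=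
  stmt14_general m k hk Λ s
end

section
/- (Theorem 4.2) Fix integers m ≥ 1 and k₁, …, k_m ≥ 1 and fix m mutually distinct complex numbers Λ₁, …, Λ_m. For every δ > 0 there exists ε₀ > 0 such that: whenever λ_{ij} (i = 1, …, m; j = 1, …, kᵢ) are mutually distinct complex numbers with |λ_{ij} − Λᵢ| < ε₀ for all i, j, there exist functions f_{ij} (i = 1, …, m; j = 1, …, kᵢ), each belonging to the span of the exponential functions e^{λ_{ij} x} in L²([−π, π]), such that ‖f_{ij}(x) − x^{j−1} e^{Λᵢ x}‖_{L²([−π,π])} < δ for all i = 1, …, m and j = 1, …, kᵢ. -/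
/-!
The function `f_{ij}` is `j!` times the divided difference of `z ↦ e^{zx}` at the distinct nodes
`λ_{i0}, …, λ_{ij}`, a linear combination of the `e^{λ_{il} x}`. Expanding `e^{zx}` in powers of
`z`, the divided difference of `z^r` at `n + 1` distinct nodes vanishes for `r < n` and equals the
complete homogeneous symmetric polynomial `h_{r-n}` of the nodes for `r ≥ n`. Translating the
nodes by `-Λᵢ` only multiplies by `e^{Λᵢ x}`, and for nodes of size at most `ε` we have
`h_0 = 1` and `|h_d| = O(ε)` for `d ≥ 1`, so `n!` times the divided difference is
`x^n e^{Λᵢ x} + O(ε)` uniformly on `[-π, π]`, hence in `L²`.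
-/

open MeasureTheory

open scoped Nat

section CompleteHomogeneous

variable {R : Type*}

/-- The complete homogeneous symmetric polynomial `h_d` evaluated at the entries of `L`: a monomial
of degree `d + 1` either contains the head `x`, which can be factored out, or lives on the tail. -/
def completeHomogeneous [CommRing R] : ℕ → List R → R
  | 0, _ => 1
  | _ + 1, [] => 0
  | d + 1, x :: L => x * completeHomogeneous d (x :: L) + completeHomogeneous (d + 1) L
termination_by d L => (d, L.length)

namespace completeHomogeneous

variable [CommRing R]

@[simp] lemma zero_left (L : List R) : completeHomogeneous 0 L = 1 := by
  simp [completeHomogeneous]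

@[simp] lemma succ_nil (d : ℕ) : completeHomogeneous (d + 1) ([] : List R) = 0 := by
  simp [completeHomogeneous]

lemma succ_cons (d : ℕ) (x : R) (L : List R) :
    completeHomogeneous (d + 1) (x :: L) =
      x * completeHomogeneous d (x :: L) + completeHomogeneous (d + 1) L := by
  simp [completeHomogeneous]

@[simp] lemma singleton (d : ℕ) (x : R) : completeHomogeneous d [x] = x ^ d := by
  induction d with
  | zero => simp
  | succ d ih => rw [succ_cons, ih, succ_nil]; ring

lemma mul_cons_sub_mul_cons (d : ℕ) (x y : R) (L : List R) :
    x * completeHomogeneous d (x :: L) - y * completeHomogeneous d (y :: L) =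
      (x - y) * completeHomogeneous d (x :: y :: L) := by
  induction d generalizing L with
  | zero => simp
  | succ d ih =>
    rw [succ_cons d x L, succ_cons d y L, succ_cons d x (y :: L), succ_cons d y L]
    linear_combination x * ih L

lemma succ_cons_sub_succ_cons (d : ℕ) (x y : R) (L : List R) :
    completeHomogeneous (d + 1) (x :: L) - completeHomogeneous (d + 1) (y :: L) =
      (x - y) * completeHomogeneous d (x :: y :: L) := by
  rw [succ_cons, succ_cons, ← mul_cons_sub_mul_cons]
  ring

end completeHomogeneous

lemma norm_completeHomogeneous_le [NormedCommRing R] [NormOneClass R] {M : ℝ}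
    (hM : 0 ≤ M) (d : ℕ) (L : List R) (hL : ∀ x ∈ L, ‖x‖ ≤ M) :
    ‖completeHomogeneous d L‖ ≤ 2 ^ (d + L.length) * M ^ d := by
  induction d generalizing L with
  | zero => simp [one_le_pow₀ (one_le_two : (1 : ℝ) ≤ 2)]
  | succ d ihd =>
    induction L with
    | nil => simpa using pow_nonneg hM _
    | cons x L ihL =>
      have hxL := ihd (x :: L) hL
      have hL' := ihL fun y hy => hL y (List.mem_cons_of_mem x hy)
      rw [completeHomogeneous.succ_cons]
      calc _ ≤ ‖x‖ * ‖completeHomogeneous d (x :: L)‖ + ‖completeHomogeneous (d + 1) L‖ :=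
            (norm_add_le _ _).trans (add_le_add_left (norm_mul_le _ _) _)
        _ ≤ M * (2 ^ (d + (x :: L).length) * M ^ d) + 2 ^ (d + 1 + L.length) * M ^ (d + 1) := by
            gcongr
            exact hL x List.mem_cons_self
        _ = _ := by simp only [List.length_cons]; ring

end CompleteHomogeneous

section DividedDifference

variable {𝕜 E F : Type*} [Field 𝕜] [AddCommGroup E] [Module 𝕜 E] [AddCommGroup F] [Module 𝕜 F]

/-- For distinct nodes this is the usual divided difference `g[a₀, …, aₙ]`, via the recursion that
drops `a₁` resp. `a₀`; with a repeated node it is junk, since `(a - a)⁻¹ = 0`. -/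
noncomputable def dividedDiff (g : 𝕜 → E) : List 𝕜 → E
  | [] => 0
  | [a] => g a
  | a :: b :: L => (a - b)⁻¹ • (dividedDiff g (a :: L) - dividedDiff g (b :: L))
termination_by L => L.length

lemma dividedDiff_mem_span (g : 𝕜 → E) (L : List 𝕜) :
    dividedDiff g L ∈ Submodule.span 𝕜 (g '' {a | a ∈ L}) := by
  induction L using dividedDiff.induct with
  | case1 => simp [dividedDiff]
  | case2 a => exact Submodule.subset_span ⟨a, by simp, by simp [dividedDiff]⟩
  | case3 a b L iha ihb =>
    rw [dividedDiff]
    refine Submodule.smul_mem _ _ (Submodule.sub_mem _ ?_ ?_)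
    · refine Submodule.span_mono (Set.image_mono ?_) iha
      intro x; simp only [Set.mem_ofPred_eq, List.mem_cons]; tauto
    · refine Submodule.span_mono (Set.image_mono ?_) ihb
      intro x; simp only [Set.mem_ofPred_eq, List.mem_cons]; tauto

lemma map_dividedDiff (T : E →ₗ[𝕜] F) (g : 𝕜 → E) (L : List 𝕜) :
    T (dividedDiff g L) = dividedDiff (T ∘ g) L := by
  induction L using dividedDiff.induct with
  | case1 => simp [dividedDiff]
  | case2 a => simp [dividedDiff]
  | case3 a b L iha ihb => rw [dividedDiff, dividedDiff, map_smul, map_sub, iha, ihb]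

lemma dividedDiff_smul (c : 𝕜) (g : 𝕜 → E) (L : List 𝕜) :
    dividedDiff (fun z => c • g z) L = c • dividedDiff g L := by
  induction L using dividedDiff.induct with
  | case1 => simp [dividedDiff]
  | case2 a => simp [dividedDiff]
  | case3 a b L iha ihb => rw [dividedDiff, dividedDiff, iha, ihb, ← smul_sub, smul_comm]

lemma dividedDiff_comp_add (g : 𝕜 → E) (c : 𝕜) (L : List 𝕜) :
    dividedDiff (fun z => g (c + z)) L = dividedDiff g (L.map (c + ·)) := by
  induction L using dividedDiff.induct with
  | case1 => simp [dividedDiff]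
  | case2 a => simp [dividedDiff]
  | case3 a b L iha ihb =>
    simp only [List.map_cons] at iha ihb ⊢
    rw [dividedDiff, dividedDiff, iha, ihb, add_sub_add_left_eq_sub]

lemma hasSum_dividedDiff [TopologicalSpace E] [IsTopologicalAddGroup E] [ContinuousConstSMul 𝕜 E]
    {ι : Type*} {f : ι → 𝕜 → E} {g : 𝕜 → E} (hf : ∀ z, HasSum (f · z) (g z)) (L : List 𝕜) :
    HasSum (fun i => dividedDiff (f i) L) (dividedDiff g L) := by
  induction L using dividedDiff.induct with
  | case1 => simp [dividedDiff]
  | case2 a => simpa [dividedDiff] using hf a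
  | case3 a b L iha ihb =>
    simp only [dividedDiff]
    exact (iha.sub ihb).const_smul _

lemma dividedDiff_pow {L : List 𝕜} (hL : L.Nodup) {n : ℕ} (hn : L.length = n + 1) (r : ℕ) :
    dividedDiff (· ^ r) L = if n ≤ r then completeHomogeneous (r - n) L else 0 := by
  induction L using dividedDiff.induct generalizing n with
  | case1 => simp at hn
  | case2 a =>
    obtain rfl : n = 0 := by simpa using hn.symm
    simp [dividedDiff]
  | case3 a b L iha ihb =>
    obtain rfl : n = L.length + 1 := by simpa using hn.symm
    have hab : a - b ≠ 0 := sub_ne_zero.2 (by simp_all)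
    rw [dividedDiff, iha (hL.sublist (by simp)) rfl, ihb (hL.sublist (by simp)) rfl, smul_eq_mul]
    rcases lt_trichotomy r (L.length) with hr | rfl | hr
    · simp [hr.not_ge, (hr.trans (Nat.lt_succ_self _)).not_ge]
    · simp
    · obtain ⟨d, rfl⟩ := Nat.exists_eq_add_of_lt hr
      rw [if_pos (by omega), if_pos (by omega), if_pos (by omega),
        show L.length + d + 1 - L.length = d + 1 by omega,
        show L.length + d + 1 - (L.length + 1) = d by omega,
        completeHomogeneous.succ_cons_sub_succ_cons, inv_mul_cancel_left₀ hab]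

end DividedDifference

lemma norm_dividedDiff_pow_sub_le {L : List ℂ} (hL : L.Nodup) {n : ℕ} (hn : L.length = n + 1)
    {ε : ℝ} (hε : ε ≤ 1) (hLε : ∀ a ∈ L, ‖a‖ ≤ ε) (r : ℕ) :
    ‖dividedDiff (· ^ r) L - if r = n then 1 else 0‖ ≤ 2 ^ (r + 1) * ε := by
  obtain ⟨a, ha⟩ := List.exists_mem_of_length_pos (l := L) (by omega)
  have hε0 : 0 ≤ ε := (norm_nonneg a).trans (hLε a ha)
  rw [dividedDiff_pow hL hn]
  rcases lt_trichotomy r n with hr | rfl | hr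
  · simp [hr.not_ge, hr.ne]
    positivity
  · simp
    positivity
  · obtain ⟨d, rfl⟩ := Nat.exists_eq_add_of_lt hr
    rw [if_pos (by omega), if_neg (by omega), sub_zero, show n + d + 1 - n = d + 1 by omega]
    calc _ ≤ 2 ^ (d + 1 + L.length) * ε ^ (d + 1) := norm_completeHomogeneous_le hε0 _ _ hLε
      _ ≤ 2 ^ (n + d + 1 + 1) * ε := by
        rw [hn, show d + 1 + (n + 1) = n + d + 1 + 1 by omega]
        gcongr
        exact pow_le_of_le_one hε0 hε (by omega)

lemma norm_factorial_mul_dividedDiff_exp_sub_pow_le {L : List ℂ} (hL : L.Nodup) {n : ℕ}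
    (hn : L.length = n + 1) {ε : ℝ} (hε : ε ≤ 1) (hLε : ∀ a ∈ L, ‖a‖ ≤ ε) {x : ℂ} {R : ℝ}
    (hx : ‖x‖ ≤ R) :
    ‖n ! * dividedDiff (fun z => Complex.exp (z * x)) L - x ^ n‖ ≤
      2 * n ! * Real.exp (2 * R) * ε := by
  have hexp : ∀ z : ℂ, HasSum (fun r => (x ^ r / r !) • z ^ r) (Complex.exp (z * x)) := fun z => by
    have h : (fun r => (x ^ r / r !) • z ^ r) = fun r => (z * x) ^ r / r ! :=
      funext fun r => by rw [smul_eq_mul]; ring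
    rw [h, Complex.exp_eq_exp_ℂ]
    exact NormedSpace.expSeries_div_hasSum_exp (z * x)
  have hterm : ∀ r : ℕ, n ! * dividedDiff (fun z => (x ^ r / r !) • z ^ r) L -
      (if r = n then x ^ n else 0) =
        n ! * (x ^ r / r !) * (dividedDiff (· ^ r) L - if r = n then 1 else 0) := fun r => by
    rw [dividedDiff_smul, smul_eq_mul]
    split_ifs with hr
    · subst hr
      have : (r ! : ℂ) ≠ 0 := by exact_mod_cast r.factorial_ne_zero
      field_simp
    · simp only [sub_zero]
      ring
  have hsum : HasSum
      (fun r => n ! * (x ^ r / r !) * (dividedDiff (· ^ r) L - if r = n then 1 else 0))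
      (n ! * dividedDiff (fun z => Complex.exp (z * x)) L - x ^ n) := by
    simpa only [hterm] using
      ((hasSum_dividedDiff hexp L).mul_left (n ! : ℂ)).sub (hasSum_ite_eq n (x ^ n))
  have hbound : HasSum (fun r => n ! * ((2 * R) ^ r / r !) * (2 * ε))
      (n ! * Real.exp (2 * R) * (2 * ε)) := by
    have h := NormedSpace.expSeries_div_hasSum_exp (2 * R)
    rw [← Real.exp_eq_exp_ℝ] at h
    exact (h.mul_left _).mul_right _
  refine (hsum.norm_le_of_bounded hbound fun r => ?_).trans_eq (by ring)
  calc _ ≤ n ! * (R ^ r / r !) * (2 ^ (r + 1) * ε) := by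
        rw [norm_mul, norm_mul, norm_div, norm_pow, Complex.norm_natCast, Complex.norm_natCast]
        have hR : 0 ≤ R := (norm_nonneg x).trans hx
        gcongr
        exact norm_dividedDiff_pow_sub_le hL hn hε hLε r
    _ = n ! * ((2 * R) ^ r / r !) * (2 * ε) := by ring

lemma norm_factorial_mul_dividedDiff_exp_sub_le {L : List ℂ} (hL : L.Nodup) {n : ℕ}
    (hn : L.length = n + 1) {Λ : ℂ} {ε : ℝ} (hε : ε ≤ 1) (hLε : ∀ a ∈ L, ‖a - Λ‖ ≤ ε) {x : ℂ}
    {R : ℝ} (hx : ‖x‖ ≤ R) :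
    ‖n ! * dividedDiff (fun z => Complex.exp (z * x)) L - x ^ n * Complex.exp (Λ * x)‖ ≤
      2 * n ! * Real.exp ((‖Λ‖ + 2) * R) * ε := by
  set ν := L.map (-Λ + ·)
  have hν : ν.map (Λ + ·) = L := by simp [ν, List.map_map, Function.comp_def]
  have hshift : dividedDiff (fun z => Complex.exp (z * x)) L =
      Complex.exp (Λ * x) * dividedDiff (fun z => Complex.exp (z * x)) ν := by
    rw [← hν, ← dividedDiff_comp_add, ← smul_eq_mul, ← dividedDiff_smul]
    simp only [add_mul, Complex.exp_add, smul_eq_mul]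
  have hνε : ∀ a ∈ ν, ‖a‖ ≤ ε := by simpa [ν, neg_add_eq_sub] using hLε
  have hν0 := norm_factorial_mul_dividedDiff_exp_sub_pow_le
    (hL.map (add_right_injective _)) (by simp [ν, hn] : ν.length = n + 1) hε hνε hx
  have hR : 0 ≤ R := (norm_nonneg x).trans hx
  calc _ = ‖Complex.exp (Λ * x)‖ *
        ‖n ! * dividedDiff (fun z => Complex.exp (z * x)) ν - x ^ n‖ := by
        rw [hshift, ← norm_mul]; ring_nf
    _ ≤ Real.exp (‖Λ‖ * R) * (2 * n ! * Real.exp (2 * R) * ε) := by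
        gcongr
        calc _ ≤ Real.exp ‖Λ * x‖ := Complex.norm_exp_le_exp_norm _
          _ ≤ _ := by rw [norm_mul]; gcongr
    _ = _ := by rw [add_mul, Real.exp_add]; ring

lemma L2norm_le_of_forall_norm_le_s15 {g : ℝ → ℂ} {s : ℝ}
    (h : ∀ x ∈ Set.Icc (-Real.pi) Real.pi, ‖g x‖ ≤ s) :
    L2norm g ≤ Real.sqrt (2 * Real.pi) * s := by
  have hs : 0 ≤ s := (norm_nonneg _).trans (h 0 ⟨by linarith [Real.pi_pos], Real.pi_pos.le⟩)
  have hint : ∫ x in Set.Icc (-Real.pi) Real.pi, ‖g x‖ ^ 2 ≤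
      ∫ _ in Set.Icc (-Real.pi) Real.pi, s ^ 2 :=
    integral_mono_of_nonneg (Filter.Eventually.of_forall fun x => by positivity)
      (integrableOn_const measure_Icc_lt_top.ne)
      (ae_restrict_of_forall_mem measurableSet_Icc fun x hx =>
        pow_le_pow_left₀ (norm_nonneg _) (h x hx) 2)
  rw [setIntegral_const, Real.volume_real_Icc_of_le (by linarith [Real.pi_pos]), smul_eq_mul]
    at hint
  calc L2norm g ≤ Real.sqrt ((Real.pi - -Real.pi) * s ^ 2) := Real.sqrt_le_sqrt hint
    _ = _ := by rw [Real.sqrt_mul (by linarith [Real.pi_pos]), Real.sqrt_sq hs]; ring_nf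

open Filter Topology in
lemma exists_pos_le_one_forall_mul_lt {ι : Type*} [Finite ι] (C : ι → ℝ) {δ : ℝ} (hδ : 0 < δ) :
    ∃ ε > 0, ε ≤ 1 ∧ ∀ i, C i * ε < δ := by
  have hsmall : ∀ᶠ ε in 𝓝 (0 : ℝ), ε ≤ 1 ∧ ∀ i, C i * ε < δ := by
    refine (eventually_le_nhds one_pos).and (eventually_all.2 fun i => ?_)
    have : Tendsto (fun ε => C i * ε) (𝓝 0) (𝓝 (C i * 0)) := tendsto_id.const_mul _
    exact this.eventually (gt_mem_nhds (by simpa using hδ))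
  obtain ⟨ε, hε, hε0⟩ :=
    ((hsmall.filter_mono nhdsWithin_le_nhds).and (self_mem_nhdsWithin (s := Set.Ioi 0))).exists
  exact ⟨ε, hε0, hε⟩

lemma L2norm_factorial_smul_dividedDiff_exp_sub_le {L : List ℂ} (hL : L.Nodup) {n : ℕ}
    (hn : L.length = n + 1) {Λ : ℂ} {ε : ℝ} (hε : ε ≤ 1) (hLε : ∀ a ∈ L, ‖a - Λ‖ ≤ ε) :
    L2norm (fun x : ℝ =>
        ((n ! : ℂ) • dividedDiff (fun z (x : ℝ) => Complex.exp (z * x)) L) x -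
          (x : ℂ) ^ n * Complex.exp (Λ * x)) ≤
      Real.sqrt (2 * Real.pi) * (2 * n ! * Real.exp ((‖Λ‖ + 2) * Real.pi)) * ε := by
  rw [mul_assoc]
  refine L2norm_le_of_forall_norm_le_s15 fun x hx => ?_
  have hx : ‖(x : ℂ)‖ ≤ Real.pi := by rw [Complex.norm_real, Real.norm_eq_abs, abs_le]; exact hx
  have heval : dividedDiff (fun z (x : ℝ) => Complex.exp (z * x)) L x =
      dividedDiff (fun z => Complex.exp (z * x)) L :=
    map_dividedDiff (LinearMap.proj x : (ℝ → ℂ) →ₗ[ℂ] ℂ) _ L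
  simpa only [Pi.smul_apply, smul_eq_mul, heval] using
    norm_factorial_mul_dividedDiff_exp_sub_le hL hn hε hLε hx

theorem stmt15_general (m : ℕ) (k : Fin m → ℕ)
    (Λ : Fin m → ℂ) :
    ∀ δ > (0 : ℝ), ∃ ε₀ > (0 : ℝ),
      ∀ lam : (Σ i : Fin m, Fin (k i)) → ℂ, Function.Injective lam →
      (∀ p : Σ i : Fin m, Fin (k i), ‖lam p - Λ p.1‖ < ε₀) →
      ∃ f : (Σ i : Fin m, Fin (k i)) → (ℝ → ℂ),
        (∀ p, f p ∈ Submodule.span ℂ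
          (Set.range fun p' : Σ i : Fin m, Fin (k i) =>
            fun x : ℝ => Complex.exp (lam p' * x))) ∧
        ∀ p : Σ i : Fin m, Fin (k i),
          L2norm (fun x : ℝ =>
            f p x - (x : ℂ) ^ (p.2 : ℕ) * Complex.exp (Λ p.1 * x)) < δ := by
  intro δ hδ
  obtain ⟨ε₀, hε₀, hε₀1, hCε₀⟩ := exists_pos_le_one_forall_mul_lt
    (fun p : Σ i : Fin m, Fin (k i) => Real.sqrt (2 * Real.pi) * (2 * (p.2 : ℕ)! *
      Real.exp ((‖Λ p.1‖ + 2) * Real.pi))) hδ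
  refine ⟨ε₀, hε₀, fun lam hlam hclose => ?_⟩
  let nodes (p : Σ i : Fin m, Fin (k i)) : List ℂ :=
    List.ofFn fun t : Fin (p.2 + 1) => lam ⟨p.1, Fin.castLE p.2.isLt t⟩
  refine ⟨fun p => ((p.2 : ℕ)! : ℂ) •
    dividedDiff (fun z (x : ℝ) => Complex.exp (z * x)) (nodes p), fun p => ?_, fun p => ?_⟩
  · refine Submodule.smul_mem _ _ (Submodule.span_mono ?_ (dividedDiff_mem_span _ _))
    rintro _ ⟨z, hz, rfl⟩
    obtain ⟨t, rfl⟩ := List.mem_ofFn.1 hz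
    exact ⟨_, rfl⟩
  · have hnodup : (nodes p).Nodup :=
      List.nodup_ofFn.2 (hlam.comp (sigma_mk_injective.comp (Fin.castLE_injective _)))
    have hnear : ∀ a ∈ nodes p, ‖a - Λ p.1‖ ≤ ε₀ := by
      intro a ha
      obtain ⟨t, rfl⟩ := List.mem_ofFn.1 ha
      exact (hclose _).le
    exact (L2norm_factorial_smul_dividedDiff_exp_sub_le hnodup List.length_ofFn hε₀1
      hnear).trans_lt (hCε₀ p)

/-- Theorem 4.2: fix cluster limits `Λ₁, …, Λ_m` (mutually distinct) and
multiplicities `k₁, …, k_m ≥ 1`. For every `δ > 0` there is `ε₀ > 0` such that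
whenever the `λ_{ij}` are mutually distinct with `|λ_{ij} − Λᵢ| < ε₀`, there are
functions `f_{ij}` in the span of the exponentials `e^{λ_{ij} x}` with
`‖f_{ij}(x) − x^{j−1} e^{Λᵢ x}‖_{L²([-π,π])} < δ` for all `i, j`
(indices `j` shifted so `j : Fin kᵢ` corresponds to the monomial `x^j`). -/
theorem stmt15 (m : ℕ) (hm : 1 ≤ m) (k : Fin m → ℕ) (hk : ∀ i, 1 ≤ k i)
    (Λ : Fin m → ℂ) (hΛ : Function.Injective Λ) :
    ∀ δ > (0 : ℝ), ∃ ε₀ > (0 : ℝ),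
      ∀ lam : (Σ i : Fin m, Fin (k i)) → ℂ, Function.Injective lam →
      (∀ p : Σ i : Fin m, Fin (k i), ‖lam p - Λ p.1‖ < ε₀) →
      ∃ f : (Σ i : Fin m, Fin (k i)) → (ℝ → ℂ),
        (∀ p, f p ∈ Submodule.span ℂ
          (Set.range fun p' : Σ i : Fin m, Fin (k i) =>
            fun x : ℝ => Complex.exp (lam p' * x))) ∧
        ∀ p : Σ i : Fin m, Fin (k i),
          L2norm (fun x : ℝ =>
            f p x - (x : ℂ) ^ (p.2 : ℕ) * Complex.exp (Λ p.1 * x)) < δ :=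
  stmt15_general m k Λ
end

section
/- (Theorem 4.3) Fix integers m ≥ 1 and k₁, …, k_m ≥ 1 with k₁ + ⋯ + k_m = n, and fix m mutually distinct complex numbers Λ₁, …, Λ_m. For every δ > 0 there exists ε₀ > 0 such that: whenever λ_{ij} (i = 1, …, m; j = 1, …, kᵢ) are mutually distinct complex numbers with |λ_{ij} − Λᵢ| < ε₀ for all i, j, there exist functions f_{ij} forming a basis of the n-dimensional subspace L = Span({e^{λ_{ij} x}}) of L²([−π, π]) and satisfying ‖f_{ij}(x) − x^{j−1} e^{Λᵢ x}‖_{L²([−π,π])} < δ for all i, j. Consequently, as λ_{ij} → Λᵢ the subspaces L converge, in the sense of convergence of subspaces of a Hilbert space, to the subspace M = Span({x^{j−1} e^{Λᵢ x}} : i = 1, …, m; j = 1, …, kᵢ) spanned by expo-polynomials. -/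
open MeasureTheory

/-!
The basis is made of divided differences: `f_{ij}(x) = (j-1)! · e^{λx}[λ_{i1}, …, λ_{ij}]`, the
divided difference in `λ` of `λ ↦ e^{λx}`. It is a combination of `e^{λ_{i1}x}, …, e^{λ_{ij}x}`
with nonzero coefficient on the last one, so by triangularity these functions span the same space
as the (linearly independent) exponentials.

Expanding `e^{zx}` in powers of `zx`, the divided difference of `z ↦ z^N` at `r` nodes is `0` for
`N < r - 1` and `1` for `N = r - 1` (Lagrange interpolation of `X^N`), and for larger `N` it obeys
the recursion of the complete homogeneous symmetric polynomials, hence is at most `2^N ε` when the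
nodes lie within `ε ≤ 1` of `0`. Summing the series gives
`|(r-1)! · e^{zx}[s] - x^{r-1}| ≤ (r-1)! ε e^{2|x|}`, and translating the nodes of cluster `i` by
`Λᵢ` multiplies everything by `e^{Λᵢx}`.
-/

open Finset Polynomial Real
open scoped Complex Nat

section DividedDifference

variable {𝕜 E : Type*} [Field 𝕜] [DecidableEq 𝕜] [AddCommGroup E] [Module 𝕜 E]

/-- The divided difference `g[s]` in Lagrange form. -/
def divDiff (g : 𝕜 → E) (s : Finset 𝕜) : E :=
  ∑ z ∈ s, (∏ w ∈ s.erase z, (z - w))⁻¹ • g z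

theorem divDiff_empty (g : 𝕜 → E) : divDiff g ∅ = 0 := by simp [divDiff]

theorem divDiff_apply {X : Type*} (g : 𝕜 → X → E) (s : Finset 𝕜) (x : X) :
    divDiff g s x = divDiff (fun z => g z x) s := by
  simp [divDiff]

theorem divDiff_pow_of_lt {s : Finset 𝕜} {N : ℕ} (hN : N < #s) :
    divDiff (· ^ N) s = if N = #s - 1 then 1 else 0 := by
  have hdeg : ((X : 𝕜[X]) ^ N).degree < #s := by rw [degree_X_pow]; exact_mod_cast hN
  have h := Lagrange.coeff_eq_sum Function.injective_id.injOn hdeg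
  simp only [coeff_X_pow, eval_X_pow, id] at h
  simp_rw [divDiff, smul_eq_mul, inv_mul_eq_div, ← h]
  exact if_congr eq_comm rfl rfl

theorem divDiff_pow_succ_insert {a : 𝕜} {s : Finset 𝕜} (ha : a ∉ s) (N : ℕ) :
    divDiff (· ^ (N + 1)) (insert a s) =
      a * divDiff (· ^ N) (insert a s) + divDiff (· ^ N) s := by
  have hterm : ∀ z ∈ s, (∏ w ∈ (insert a s).erase z, (z - w))⁻¹ * z ^ (N + 1) =
      a * ((∏ w ∈ (insert a s).erase z, (z - w))⁻¹ * z ^ N) +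
        (∏ w ∈ s.erase z, (z - w))⁻¹ * z ^ N := by
    intro z hz
    have hza : z - a ≠ 0 := sub_ne_zero.mpr (ne_of_mem_of_not_mem hz ha)
    rw [erase_insert_of_ne (ne_of_mem_of_not_mem hz ha).symm,
      prod_insert fun h => ha (mem_of_mem_erase h), mul_inv]
    field_simp
    ring
  simp only [divDiff, smul_eq_mul, sum_insert ha, erase_insert ha, mul_add, mul_sum,
    sum_congr rfl hterm, sum_add_distrib]
  ring

theorem divDiff_image_sub (g : 𝕜 → E) (s : Finset 𝕜) (c : 𝕜) :
    divDiff g (s.image (· - c)) = divDiff (fun z => g (z - c)) s := by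
  have hinj : Function.Injective (· - c : 𝕜 → 𝕜) := sub_left_injective
  rw [divDiff, sum_image fun _ _ _ _ h => hinj h]
  refine sum_congr rfl fun z _ => ?_
  rw [← image_erase hinj, prod_image fun _ _ _ _ h => hinj h]
  simp only [sub_sub_sub_cancel_right]

theorem divDiff_insert_sub_smul_mem_span (g : 𝕜 → E) {a : 𝕜} {t : Finset 𝕜} (ha : a ∉ t) :
    divDiff g (insert a t) - (∏ w ∈ t, (a - w))⁻¹ • g a ∈ Submodule.span 𝕜 (g '' t) := by
  rw [divDiff, sum_insert ha, erase_insert ha, add_sub_cancel_left]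
  exact Submodule.sum_mem _ fun z hz =>
    Submodule.smul_mem _ _ (Submodule.subset_span (Set.mem_image_of_mem g hz))

end DividedDifference

section Norm

variable {𝕜 : Type*} [NormedField 𝕜] [DecidableEq 𝕜]

theorem norm_divDiff_pow_le {ε : ℝ} (hε₀ : 0 ≤ ε) (hε₁ : ε ≤ 1) {s : Finset 𝕜}
    (hs : ∀ z ∈ s, ‖z‖ ≤ ε) {N : ℕ} (hN : #s ≤ N) : ‖divDiff (· ^ N) s‖ ≤ 2 ^ N * ε := by
  induction s using Finset.induction_on generalizing N with
  | empty => rw [divDiff_empty, norm_zero]; positivity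
  | insert a s ha ih =>
    have ha' : ‖a‖ ≤ ε := hs a (mem_insert_self a s)
    replace ih := fun {M} => ih (fun z hz => hs z (mem_insert_of_mem hz)) (N := M)
    rw [card_insert_of_notMem ha] at hN
    have hstep : ∀ M, #s ≤ M → ‖divDiff (· ^ M) (insert a s)‖ ≤ 2 ^ M →
        ‖divDiff (· ^ (M + 1)) (insert a s)‖ ≤ 2 ^ (M + 1) * ε := by
      intro M hM h
      rw [divDiff_pow_succ_insert ha]
      calc _ ≤ ‖a‖ * ‖divDiff (· ^ M) (insert a s)‖ + ‖divDiff (· ^ M) s‖ :=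
            (norm_add_le _ _).trans_eq (by rw [norm_mul])
        _ ≤ ε * 2 ^ M + 2 ^ M * ε := by gcongr; exact ih hM
        _ = 2 ^ (M + 1) * ε := by ring
    have hbound : ∀ M, #s ≤ M → ‖divDiff (· ^ M) (insert a s)‖ ≤ 2 ^ M := by
      intro M hM
      induction M, hM using Nat.le_induction with
      | base =>
        rw [divDiff_pow_of_lt (by rw [card_insert_of_notMem ha]; omega),
          card_insert_of_notMem ha, Nat.add_sub_cancel, if_pos rfl, norm_one]
        exact one_le_pow₀ one_le_two
      | succ M hM ihM =>
        exact (hstep M hM ihM).trans (mul_le_of_le_one_right (by positivity) hε₁)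
    obtain ⟨M, rfl⟩ : ∃ M, N = M + 1 := ⟨N - 1, by omega⟩
    exact hstep M (by omega) (hbound M (by omega))

theorem norm_divDiff_pow_sub_le {ε : ℝ} (hε₀ : 0 ≤ ε) (hε₁ : ε ≤ 1) {s : Finset 𝕜}
    (hne : s.Nonempty) (hs : ∀ z ∈ s, ‖z‖ ≤ ε) (N : ℕ) :
    ‖divDiff (· ^ N) s - if N = #s - 1 then 1 else 0‖ ≤ 2 ^ N * ε := by
  rcases lt_or_ge N #s with hN | hN
  · rw [divDiff_pow_of_lt hN, sub_self, norm_zero]; positivity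
  · rw [if_neg (by have := hne.card_pos; omega), sub_zero]
    exact norm_divDiff_pow_le hε₀ hε₁ hs hN

end Norm

theorem hasSum_divDiff_cexp (s : Finset ℂ) (x : ℂ) :
    HasSum (fun N : ℕ => x ^ N / N ! * divDiff (· ^ N) s)
      (divDiff (fun z => cexp (z * x)) s) := by
  have h : ∀ z ∈ s, HasSum (fun N : ℕ => (∏ w ∈ s.erase z, (z - w))⁻¹ • ((z * x) ^ N / N !))
      ((∏ w ∈ s.erase z, (z - w))⁻¹ • cexp (z * x)) := fun z _ => by
    rw [Complex.exp_eq_exp_ℂ]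
    exact (NormedSpace.expSeries_div_hasSum_exp (z * x)).const_smul _
  refine (hasSum_sum h).congr_fun fun N => ?_
  simp only [divDiff, smul_eq_mul, mul_sum]
  exact sum_congr rfl fun z _ => by ring

theorem norm_divDiff_cexp_sub_le {ε : ℝ} (hε₀ : 0 ≤ ε) (hε₁ : ε ≤ 1) {s : Finset ℂ}
    (hne : s.Nonempty) (hs : ∀ z ∈ s, ‖z‖ ≤ ε) (x : ℂ) :
    ‖divDiff (fun z => cexp (z * x)) s - x ^ (#s - 1) / (#s - 1)!‖ ≤
      ε * Real.exp (2 * ‖x‖) := by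
  have hsum : HasSum
      (fun N : ℕ => x ^ N / N ! * (divDiff (· ^ N) s - if N = #s - 1 then 1 else 0))
      (divDiff (fun z => cexp (z * x)) s - x ^ (#s - 1) / (#s - 1)!) := by
    refine ((hasSum_divDiff_cexp s x).sub
      (hasSum_ite_eq (#s - 1) (x ^ (#s - 1) / (#s - 1)!))).congr_fun fun N => ?_
    split_ifs with h
    · subst h; ring
    · ring
  have hbound : HasSum (fun N : ℕ => ε * ((2 * ‖x‖) ^ N / N !)) (ε * Real.exp (2 * ‖x‖)) := by
    rw [Real.exp_eq_exp_ℝ]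
    exact (NormedSpace.expSeries_div_hasSum_exp _).mul_left ε
  refine hsum.norm_le_of_bounded hbound fun N => ?_
  rw [norm_mul, norm_div, norm_pow, Complex.norm_natCast]
  calc _ ≤ ‖x‖ ^ N / N ! * (2 ^ N * ε) := by
        gcongr; exact norm_divDiff_pow_sub_le hε₀ hε₁ hne hs N
    _ = _ := by rw [mul_pow]; ring

theorem divDiff_cexp_eq_cexp_mul (s : Finset ℂ) (c x : ℂ) :
    divDiff (fun z => cexp (z * x)) s =
      cexp (c * x) * divDiff (fun z => cexp (z * x)) (s.image (· - c)) := by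
  rw [divDiff_image_sub]
  simp only [divDiff, smul_eq_mul, mul_sum]
  refine sum_congr rfl fun z _ => ?_
  rw [mul_left_comm, ← Complex.exp_add]
  ring_nf

theorem norm_factorial_mul_divDiff_cexp_sub_le {ε : ℝ} (hε₀ : 0 ≤ ε) (hε₁ : ε ≤ 1)
    {s : Finset ℂ} {r : ℕ} (hcard : #s = r + 1) {c : ℂ} (hs : ∀ z ∈ s, ‖z - c‖ ≤ ε) (x : ℂ) :
    ‖r ! * divDiff (fun z => cexp (z * x)) s - x ^ r * cexp (c * x)‖ ≤
      r ! * ε * Real.exp ((‖c‖ + 2) * ‖x‖) := by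
  set t := s.image (· - c)
  have ht : #t = r + 1 := by rw [Finset.card_image_of_injective _ sub_left_injective, hcard]
  have key := norm_divDiff_cexp_sub_le hε₀ hε₁ (s := t) (card_pos.mp (by omega))
    (forall_mem_image.mpr hs) x
  rw [ht, Nat.add_sub_cancel] at key
  have hsplit : r ! * divDiff (fun z => cexp (z * x)) s - x ^ r * cexp (c * x) =
      cexp (c * x) * (r ! * (divDiff (fun z => cexp (z * x)) t - x ^ r / r !)) := by
    have hr : (r ! : ℂ) ≠ 0 := Nat.cast_ne_zero.mpr r.factorial_ne_zero
    rw [divDiff_cexp_eq_cexp_mul s c x, mul_sub (r ! : ℂ), mul_div_cancel₀ _ hr]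
    ring
  rw [hsplit, norm_mul, norm_mul, Complex.norm_natCast]
  calc _ ≤ Real.exp (‖c‖ * ‖x‖) * (r ! * (ε * Real.exp (2 * ‖x‖))) := by
        gcongr
        exact (Complex.norm_exp_le_exp_norm _).trans_eq (by rw [norm_mul])
    _ = _ := by rw [add_mul, Real.exp_add]; ring

theorem cexp_mul_ofReal_injective :
    Function.Injective fun (a : ℂ) (x : ℝ) => cexp (a * x) := by
  intro a b hab
  have hderiv : ∀ a : ℂ, HasDerivAt (fun x : ℝ => cexp (a * x)) a 0 := fun a => by
    simpa using ((hasDerivAt_id (0 : ℂ)).const_mul a).cexp.comp_ofReal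
  have ha := hderiv a
  simp only at hab
  rw [hab] at ha
  exact ha.unique (hderiv b)

theorem linearIndependent_cexp_mul {ι : Type*} {lam : ι → ℂ} (h : Function.Injective lam) :
    LinearIndependent ℂ fun i (x : ℝ) => cexp (lam i * x) := by
  let χ : ℂ → Multiplicative ℝ →* ℂ := fun a =>
    { toFun := fun x => cexp (a * x.toAdd)
      map_one' := by simp
      map_mul' := fun x y => by simp [mul_add, Complex.exp_add] }
  exact (linearIndependent_monoidHom (Multiplicative ℝ) ℂ).comp (fun i => χ (lam i))
    fun i j hij =>
      h (cexp_mul_ofReal_injective (funext fun x => DFunLike.congr_fun hij (.ofAdd x)))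

theorem L2norm_le_of_norm_le {g : ℝ → ℂ} {C : ℝ} (hg : ∀ x ∈ Set.Icc (-π) π, ‖g x‖ ≤ C) :
    L2norm g ≤ √(2 * π) * C := by
  have hC : 0 ≤ C := (norm_nonneg _).trans (hg 0 ⟨by linarith [pi_pos], pi_pos.le⟩)
  have hint := norm_setIntegral_le_of_norm_le_const (μ := volume) (s := Set.Icc (-π) π)
    (f := fun x => ‖g x‖ ^ 2) (C := C ^ 2) measure_Icc_lt_top fun x hx => by
      rw [norm_pow, norm_norm]; exact pow_le_pow_left₀ (norm_nonneg _) (hg x hx) 2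
  rw [Real.volume_real_Icc_of_le (by linarith [pi_pos]), Real.norm_eq_abs] at hint
  calc L2norm g ≤ √(C ^ 2 * (π - -π)) := Real.sqrt_le_sqrt ((le_abs_self _).trans hint)
    _ = √(2 * π) * C := by
      rw [show C ^ 2 * (π - -π) = 2 * π * C ^ 2 by ring, Real.sqrt_mul (by positivity),
        Real.sqrt_sq hC]

theorem span_range_eq_of_triangular {R M ι : Type*} [DivisionRing R] [AddCommGroup M]
    [Module R M] {e f : ι → M} (rk : ι → ℕ)
    (h : ∀ i, ∃ c : R, c ≠ 0 ∧ f i - c • e i ∈ Submodule.span R (e '' {j | rk j < rk i})) :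
    Submodule.span R (Set.range f) = Submodule.span R (Set.range e) := by
  apply le_antisymm
  · rw [Submodule.span_le]
    rintro _ ⟨i, rfl⟩
    obtain ⟨c, -, hc⟩ := h i
    simpa using add_mem (Submodule.span_mono (Set.image_subset_range _ _) hc)
      (Submodule.smul_mem _ c (Submodule.subset_span (Set.mem_range_self i)))
  · rw [Submodule.span_le]
    rintro _ ⟨i, rfl⟩
    induction hi : rk i using Nat.strong_induction_on generalizing i with
    | _ n ih =>
      obtain ⟨c, hc₀, hc⟩ := h i
      have hle : Submodule.span R (e '' {j | rk j < rk i}) ≤ Submodule.span R (Set.range f) :=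
        Submodule.span_le.mpr <| by rintro _ ⟨j, hj, rfl⟩; exact ih (rk j) (hi ▸ hj) j rfl
      have hce : c • e i ∈ Submodule.span R (Set.range f) := by
        simpa using sub_mem (Submodule.subset_span (Set.mem_range_self i)) (hle hc)
      simpa [smul_smul, inv_mul_cancel₀ hc₀] using Submodule.smul_mem _ c⁻¹ hce

theorem linearIndependent_of_span_range_eq {K V ι : Type*} [DivisionRing K] [AddCommGroup V]
    [Module K V] [Fintype ι] {e f : ι → V} (he : LinearIndependent K e)
    (h : Submodule.span K (Set.range f) = Submodule.span K (Set.range e)) :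
    LinearIndependent K f := by
  rw [linearIndependent_iff_card_eq_finrank_span, Set.finrank] at he ⊢
  rwa [h]

section Cluster

variable {m : ℕ} {k : Fin m → ℕ}

noncomputable def clusterNodes (lam : (Σ i : Fin m, Fin (k i)) → ℂ)
    (p : Σ i : Fin m, Fin (k i)) : Finset ℂ :=
  (Iic p.2).image fun l => lam ⟨p.1, l⟩

noncomputable def clusterBasis (lam : (Σ i : Fin m, Fin (k i)) → ℂ)
    (p : Σ i : Fin m, Fin (k i)) : ℝ → ℂ :=
  ((p.2 : ℕ)! : ℂ) • divDiff (fun z (x : ℝ) => cexp (z * x)) (clusterNodes lam p)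

theorem clusterBasis_apply (lam : (Σ i : Fin m, Fin (k i)) → ℂ) (p : Σ i : Fin m, Fin (k i))
    (x : ℝ) :
    clusterBasis lam p x = (p.2 : ℕ)! * divDiff (fun z => cexp (z * x)) (clusterNodes lam p) := by
  rw [clusterBasis, Pi.smul_apply, divDiff_apply, smul_eq_mul]

variable {lam : (Σ i : Fin m, Fin (k i)) → ℂ}

theorem card_clusterNodes (hlam : Function.Injective lam) (p : Σ i : Fin m, Fin (k i)) :
    #(clusterNodes lam p) = p.2 + 1 := by
  rw [clusterNodes, card_image_of_injective _
    fun _ _ h => sigma_mk_injective (β := fun i => Fin (k i)) (hlam h), Fin.card_Iic]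

theorem clusterBasis_sub_smul_mem_span (hlam : Function.Injective lam)
    (p : Σ i : Fin m, Fin (k i)) :
    ∃ c : ℂ, c ≠ 0 ∧ clusterBasis lam p - c • (fun x : ℝ => cexp (lam p * x)) ∈
      Submodule.span ℂ ((fun q (x : ℝ) => cexp (lam q * x)) '' {q | (q.2 : ℕ) < p.2}) := by
  obtain ⟨i, j⟩ := p
  set t := (Iio j).image fun l => lam ⟨i, l⟩
  have hj : lam ⟨i, j⟩ ∉ t := fun h => by
    obtain ⟨l, hl, hlj⟩ := mem_image.mp h
    exact (mem_Iio.mp hl).ne (sigma_mk_injective (β := fun i => Fin (k i)) (hlam hlj))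
  have hnodes : clusterNodes lam ⟨i, j⟩ = insert (lam ⟨i, j⟩) t := by
    rw [clusterNodes, ← Iio_insert, image_insert]
  have ht : (fun z (x : ℝ) => cexp (z * x)) '' t ⊆
      (fun q (x : ℝ) => cexp (lam q * x)) '' {q | (q.2 : ℕ) < j} := by
    rintro _ ⟨_, hz, rfl⟩
    obtain ⟨l, hl, rfl⟩ := mem_image.mp hz
    exact ⟨⟨i, l⟩, mem_Iio.mp hl, rfl⟩
  refine ⟨(j ! : ℂ) * (∏ w ∈ t, (lam ⟨i, j⟩ - w))⁻¹, ?_, ?_⟩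
  · refine mul_ne_zero (Nat.cast_ne_zero.mpr j.val.factorial_ne_zero) (inv_ne_zero ?_)
    exact prod_ne_zero_iff.mpr fun w hw => sub_ne_zero.mpr (ne_of_mem_of_not_mem hw hj).symm
  · rw [clusterBasis, hnodes, mul_smul, ← smul_sub]
    exact Submodule.smul_mem _ _
      (Submodule.span_mono ht (divDiff_insert_sub_smul_mem_span _ hj))

theorem norm_clusterBasis_sub_le (hlam : Function.Injective lam) {Λ : ℂ} {ε : ℝ}
    (hε₀ : 0 ≤ ε) (hε₁ : ε ≤ 1) (p : Σ i : Fin m, Fin (k i))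
    (hp : ∀ l, ‖lam ⟨p.1, l⟩ - Λ‖ ≤ ε) (x : ℝ) :
    ‖clusterBasis lam p x - (x : ℂ) ^ (p.2 : ℕ) * cexp (Λ * x)‖ ≤
      (p.2 : ℕ)! * ε * Real.exp ((‖Λ‖ + 2) * |x|) := by
  have hnodes : ∀ z ∈ clusterNodes lam p, ‖z - Λ‖ ≤ ε := by
    simpa only [clusterNodes, forall_mem_image] using fun l _ => hp l
  have h := norm_factorial_mul_divDiff_cexp_sub_le hε₀ hε₁ (card_clusterNodes hlam p) hnodes x
  rwa [Complex.norm_real, Real.norm_eq_abs, ← clusterBasis_apply] at h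

end Cluster

theorem stmt16_general (m : ℕ) (k : Fin m → ℕ) (Λ : Fin m → ℂ) :
    ∀ δ > (0 : ℝ), ∃ ε₀ > (0 : ℝ),
      ∀ lam : (Σ i : Fin m, Fin (k i)) → ℂ, Function.Injective lam →
      (∀ p : Σ i : Fin m, Fin (k i), ‖lam p - Λ p.1‖ < ε₀) →
      ∃ f : (Σ i : Fin m, Fin (k i)) → (ℝ → ℂ),
        LinearIndependent ℂ f ∧
        Submodule.span ℂ (Set.range f) =
          Submodule.span ℂ
            (Set.range fun p : Σ i : Fin m, Fin (k i) =>
              fun x : ℝ => Complex.exp (lam p * x)) ∧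
        ∀ p : Σ i : Fin m, Fin (k i),
          L2norm (fun x : ℝ =>
            f p x - (x : ℂ) ^ (p.2 : ℕ) * Complex.exp (Λ p.1 * x)) < δ := by
  intro δ hδ
  set bound := fun p : Σ i : Fin m, Fin (k i) =>
    √(2 * π) * ((p.2 : ℕ)! * Real.exp ((‖Λ p.1‖ + 2) * π))
  obtain ⟨ε, hε, hεδ⟩ := exists_pos_mul_lt hδ (∑ p, bound p)
  refine ⟨min ε 1, lt_min hε one_pos, fun lam hlam hclose => ?_⟩
  have hspan := span_range_eq_of_triangular (e := fun q (x : ℝ) => cexp (lam q * x))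
    (fun q => (q.2 : ℕ)) (clusterBasis_sub_smul_mem_span hlam)
  refine ⟨clusterBasis lam,
    linearIndependent_of_span_range_eq (linearIndependent_cexp_mul hlam) hspan, hspan, fun p => ?_⟩
  have hpoint : ∀ x ∈ Set.Icc (-π) π,
      ‖clusterBasis lam p x - (x : ℂ) ^ (p.2 : ℕ) * cexp (Λ p.1 * x)‖ ≤
        (p.2 : ℕ)! * Real.exp ((‖Λ p.1‖ + 2) * π) * min ε 1 := fun x hx => by
    refine (norm_clusterBasis_sub_le hlam (by positivity) (min_le_right _ _) p
      (fun l => (hclose _).le) x).trans ?_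
    rw [mul_right_comm]
    gcongr
    exact abs_le.mpr hx
  calc L2norm _ ≤ bound p * min ε 1 := by rw [mul_assoc]; exact L2norm_le_of_norm_le hpoint
    _ ≤ (∑ q, bound q) * ε := by
      gcongr
      · exact single_le_sum (fun q _ => by positivity) (mem_univ p)
      · exact min_le_left _ _
    _ < δ := hεδ

/-- Theorem 4.3: fix cluster limits `Λ₁, …, Λ_m` (mutually distinct) and
multiplicities `k₁, …, k_m ≥ 1` with `k₁ + ⋯ + k_m = n`. For every `δ > 0` there
is `ε₀ > 0` such that whenever the `λ_{ij}` are mutually distinct with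
`|λ_{ij} − Λᵢ| < ε₀`, the subspace `L = Span({e^{λ_{ij} x}})` has a basis
`f_{ij}` (linearly independent and spanning `L`) with
`‖f_{ij}(x) − x^{j−1} e^{Λᵢ x}‖_{L²([-π,π])} < δ` for all `i, j`; consequently, as
`λ_{ij} → Λᵢ`, `L` converges to the span `M` of the expo-polynomials
`x^{j−1} e^{Λᵢ x}` in the sense of convergence of subspaces of a Hilbert space. -/
theorem stmt16 (m : ℕ) (hm : 1 ≤ m) (k : Fin m → ℕ) (hk : ∀ i, 1 ≤ k i)
    (n : ℕ) (hkn : ∑ i, k i = n)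
    (Λ : Fin m → ℂ) (hΛ : Function.Injective Λ) :
    ∀ δ > (0 : ℝ), ∃ ε₀ > (0 : ℝ),
      ∀ lam : (Σ i : Fin m, Fin (k i)) → ℂ, Function.Injective lam →
      (∀ p : Σ i : Fin m, Fin (k i), ‖lam p - Λ p.1‖ < ε₀) →
      ∃ f : (Σ i : Fin m, Fin (k i)) → (ℝ → ℂ),
        LinearIndependent ℂ f ∧
        Submodule.span ℂ (Set.range f) =
          Submodule.span ℂ
            (Set.range fun p : Σ i : Fin m, Fin (k i) =>
              fun x : ℝ => Complex.exp (lam p * x)) ∧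
        ∀ p : Σ i : Fin m, Fin (k i),
          L2norm (fun x : ℝ =>
            f p x - (x : ℂ) ^ (p.2 : ℕ) * Complex.exp (Λ p.1 * x)) < δ :=
  stmt16_general m k Λ
end
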